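/- arXiv:2203.04272 — 2 statements merged into one kernel-verified Lean document; each statement's English description precedes it below -/
import Mathlib

section
/- Total expected information gain of a stochastic design policy equals mutual information: under the data-generating process p(h_T | θ, π) = Π_{t=1}^T p(y_t | θ, ξ_t, h_{t-1}) π(ξ_t | h_{t-1}), the quantity I_T(π) := E_{p(θ) p(h_T | θ, π)}[Σ_{t=1}^T I(θ; y_t | h_{t-1}, ξ_t)] satisfies I_T(π) = E_{p(θ) p(h_T|θ,π)}[log p(h_T|θ,π)] − E_{p(h_T|π)}[log p(h_T|π)] = I(θ; h_T | π). -/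
open Finset
open scoped Classical

noncomputable section

set_option linter.unusedSectionVars false
set_option maxHeartbeats 1000000

namespace Stmt4

def pr {Ω α : Type*} [Fintype Ω] (μ : Ω → ℝ) (X : Ω → α) (x : α) : ℝ :=
  ∑ ω, if X ω = x then μ ω else 0

def ent {Ω α : Type*} [Fintype Ω] [Fintype α] (μ : Ω → ℝ) (X : Ω → α) : ℝ :=
  -∑ x, pr μ X x * Real.log (pr μ X x)

def mi {Ω α β : Type*} [Fintype Ω] [Fintype α] [Fintype β]
    (μ : Ω → ℝ) (X : Ω → α) (Y : Ω → β) : ℝ :=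
  ent μ X + ent μ Y - ent μ (fun ω => (X ω, Y ω))

def cmi {Ω α β γ : Type*} [Fintype Ω] [Fintype α] [Fintype β] [Fintype γ]
    (μ : Ω → ℝ) (X : Ω → α) (Y : Ω → β) (Z : Ω → γ) : ℝ :=
  (ent μ (fun ω => (X ω, Z ω)) - ent μ Z)
    - (ent μ (fun ω => (X ω, (Y ω, Z ω))) - ent μ (fun ω => (Y ω, Z ω)))

def res {Ξsp Ysp : Type*} {T : ℕ} (t : Fin T) (h : Fin T → Ξsp × Ysp) :
    Fin t.val → Ξsp × Ysp :=
  fun i => h ⟨i.val, i.isLt.trans t.isLt⟩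

def histLik {Θsp Ξsp Ysp : Type*} [Fintype Ξsp] [Fintype Ysp] {T : ℕ}
    (pol : (t : Fin T) → (Fin t.val → Ξsp × Ysp) → Ξsp → ℝ)
    (lik : (t : Fin T) → Θsp → (Fin t.val → Ξsp × Ysp) → Ξsp → Ysp → ℝ)
    (θ : Θsp) (h : Fin T → Ξsp × Ysp) : ℝ :=
  ∏ t : Fin T, pol t (res t h) (h t).1 * lik t θ (res t h) (h t).1 (h t).2

def joint {Θsp Ξsp Ysp : Type*} [Fintype Ξsp] [Fintype Ysp] {T : ℕ}
    (prior : Θsp → ℝ)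
    (pol : (t : Fin T) → (Fin t.val → Ξsp × Ysp) → Ξsp → ℝ)
    (lik : (t : Fin T) → Θsp → (Fin t.val → Ξsp × Ysp) → Ξsp → Ysp → ℝ) :
    Θsp × (Fin T → Ξsp × Ysp) → ℝ :=
  fun ω => prior ω.1 * histLik pol lik ω.1 ω.2

/-! ### Auxiliary lemmas -/

lemma ent_eq {Ω α : Type*} [Fintype Ω] [Fintype α] (μ : Ω → ℝ) (X : Ω → α) :
    ent μ X = -∑ ω, μ ω * Real.log (pr μ X (X ω)) := by
  unfold ent
  congr 1
  calc ∑ x : α, pr μ X x * Real.log (pr μ X x)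
      = ∑ x : α, ∑ ω, (if X ω = x then μ ω * Real.log (pr μ X (X ω)) else 0) := by
        refine Finset.sum_congr rfl fun x _ => ?_
        rw [pr, Finset.sum_mul]
        refine Finset.sum_congr rfl fun ω _ => ?_
        by_cases h : X ω = x <;> simp [h, pr]
    _ = ∑ ω, ∑ x : α, (if X ω = x then μ ω * Real.log (pr μ X (X ω)) else 0) :=
        Finset.sum_comm
    _ = ∑ ω, μ ω * Real.log (pr μ X (X ω)) := by
        refine Finset.sum_congr rfl fun ω _ => ?_
        simp

lemma sum_ite_eq_cl {α : Type*} [Fintype α] (a : α) (f : α → ℝ) :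
    (∑ x, if x = a then f x else 0) = f a := by
  rw [Finset.sum_eq_single a (fun b _ hb => if_neg hb)
    (fun ha => absurd (Finset.mem_univ a) ha), if_pos rfl]

def pre {α : Type*} {n : ℕ} (k : ℕ) (hk : k ≤ n) (h : Fin n → α) : Fin k → α :=
  fun i => h ⟨i.1, lt_of_lt_of_le i.2 hk⟩

lemma pre_self {α : Type*} {n : ℕ} (hn : n ≤ n) (h : Fin n → α) : pre n hn h = h := rfl

lemma pre_succ_eq_iff {α : Type*} {n k : ℕ} (hk : k < n) (h : Fin n → α)
    (g : Fin k → α) (a : α) :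
    pre (k+1) hk h = Fin.snoc g a ↔ (pre k hk.le h = g ∧ h ⟨k, hk⟩ = a) := by
  constructor
  · intro H
    constructor
    · funext i
      have := congrFun H (Fin.castSucc i)
      simpa [pre, Fin.snoc_castSucc] using this
    · have := congrFun H (Fin.last k)
      simpa [pre, Fin.snoc_last] using this
  · rintro ⟨H1, H2⟩
    funext i
    refine Fin.lastCases ?_ ?_ i
    · simpa [pre, Fin.snoc_last] using H2
    · intro j
      have := congrFun H1 j
      simpa [pre, Fin.snoc_castSucc] using this

lemma pre_succ {α : Type*} {n k : ℕ} (hk : k < n) (h : Fin n → α) :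
    pre (k+1) hk h = Fin.snoc (pre k hk.le h) (h ⟨k, hk⟩) :=
  (pre_succ_eq_iff hk h _ _).2 ⟨rfl, rfl⟩

section Aux

variable {Θsp Ξsp Ysp : Type*} [Fintype Θsp] [Fintype Ξsp] [Fintype Ysp] {T : ℕ}
  (prior : Θsp → ℝ)
  (pol : (t : Fin T) → (Fin t.val → Ξsp × Ysp) → Ξsp → ℝ)
  (lik : (t : Fin T) → Θsp → (Fin t.val → Ξsp × Ysp) → Ξsp → Ysp → ℝ)

def step (t : Fin T) (θ : Θsp) (g : Fin t.val → Ξsp × Ysp) (a : Ξsp × Ysp) : ℝ :=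
  pol t g a.1 * lik t θ g a.1 a.2

def preLik (k : ℕ) (hk : k ≤ T) (θ : Θsp) (g : Fin k → Ξsp × Ysp) : ℝ :=
  ∏ s : Fin k, step pol lik ⟨s.1, lt_of_lt_of_le s.2 hk⟩ θ (pre s.1 s.2.le g) (g s)

lemma preLik_top (hT : T ≤ T) (θ : Θsp) (h : Fin T → Ξsp × Ysp) :
    preLik pol lik T hT θ h = histLik pol lik θ h := rfl

lemma preLik_zero (hk : (0:ℕ) ≤ T) (θ : Θsp) (g : Fin 0 → Ξsp × Ysp) :
    preLik pol lik 0 hk θ g = 1 := by simp [preLik]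

lemma preLik_snoc (k : ℕ) (hk : k < T) (θ : Θsp) (g : Fin k → Ξsp × Ysp)
    (a : Ξsp × Ysp) :
    preLik pol lik (k+1) hk θ (Fin.snoc g a)
      = preLik pol lik k hk.le θ g * step pol lik ⟨k, hk⟩ θ g a := by
  unfold preLik
  rw [Fin.prod_univ_castSucc]
  congr 1
  · refine Finset.prod_congr rfl fun s _ => ?_
    have h1 : pre (Fin.castSucc s).1 (Fin.castSucc s).2.le (Fin.snoc g a : Fin (k+1) → Ξsp × Ysp)
        = pre s.1 s.2.le g := by
      funext j
      show (Fin.snoc g a : Fin (k+1) → Ξsp × Ysp) ⟨j.1, _⟩ = g ⟨j.1, _⟩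
      have : (⟨j.1, lt_of_lt_of_le j.2 (Fin.castSucc s).2.le⟩ : Fin (k+1))
          = Fin.castSucc ⟨j.1, lt_of_lt_of_le j.2 s.2.le⟩ := rfl
      rw [this, Fin.snoc_castSucc]
    have h2 : (Fin.snoc g a : Fin (k+1) → Ξsp × Ysp) (Fin.castSucc s) = g s := by simp
    rw [h2]
    congr 1
  · have h3 : (Fin.snoc g a : Fin (k+1) → Ξsp × Ysp) (Fin.last k) = a := by simp
    have h4 : pre (Fin.last k).1 (Fin.last k).2.le (Fin.snoc g a : Fin (k+1) → Ξsp × Ysp) = g := by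
      funext j
      show (Fin.snoc g a : Fin (k+1) → Ξsp × Ysp) ⟨j.1, _⟩ = g j
      have : (⟨j.1, lt_of_lt_of_le j.2 (Fin.last k).2.le⟩ : Fin (k+1)) = Fin.castSucc j := rfl
      rw [this, Fin.snoc_castSucc]
    rw [h3]
    congr 1

lemma histLik_pos
    (hpolp : ∀ t h', ∀ ξ, 0 < pol t h' ξ)
    (hlikp : ∀ t θ h' ξ, ∀ y, 0 < lik t θ h' ξ y)
    (θ : Θsp) (h : Fin T → Ξsp × Ysp) : 0 < histLik pol lik θ h :=
  Finset.prod_pos fun t _ => mul_pos (hpolp _ _ _) (hlikp _ _ _ _ _)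

lemma preLik_pos
    (hpolp : ∀ t h', ∀ ξ, 0 < pol t h' ξ)
    (hlikp : ∀ t θ h' ξ, ∀ y, 0 < lik t θ h' ξ y)
    (k : ℕ) (hk : k ≤ T) (θ : Θsp) (g : Fin k → Ξsp × Ysp) :
    0 < preLik pol lik k hk θ g :=
  Finset.prod_pos fun s _ => mul_pos (hpolp _ _ _) (hlikp _ _ _ _ _)

variable
  (hpol1 : ∀ t h', ∑ ξ, pol t h' ξ = 1)
  (hlik1 : ∀ t θ h' ξ, ∑ y, lik t θ h' ξ y = 1)

include hpol1 hlik1 in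
lemma master : ∀ (d k : ℕ) (hk : k ≤ T), k + d = T → ∀ (θ : Θsp) (g : Fin k → Ξsp × Ysp),
    (∑ h : Fin T → Ξsp × Ysp, if pre k hk h = g then histLik pol lik θ h else 0)
      = preLik pol lik k hk θ g := by
  intro d
  induction d with
  | zero =>
    intro k hk hkd θ g
    have hkd' : k + 0 = T := hkd
    subst hkd'
    have hpre : ∀ h : Fin (k+0) → Ξsp × Ysp, pre k hk h = h := fun h => rfl
    simp only [hpre]
    exact (Fintype.sum_ite_eq' (g : Fin (k+0) → Ξsp × Ysp) (fun x => histLik pol lik θ x)).trans rfl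
  | succ d ih =>
    intro k hk hkd θ g
    have hklt : k < T := by omega
    calc (∑ h : Fin T → Ξsp × Ysp, if pre k hk h = g then histLik pol lik θ h else 0)
        = ∑ h : Fin T → Ξsp × Ysp, ∑ a : Ξsp × Ysp,
            if pre (k+1) hklt h = Fin.snoc g a then histLik pol lik θ h else 0 := by
          refine Finset.sum_congr rfl fun h _ => ?_
          have hiff : ∀ a : Ξsp × Ysp, (pre (k+1) hklt h = Fin.snoc g a)
              ↔ (pre k hk h = g ∧ h ⟨k, hklt⟩ = a) := fun a => pre_succ_eq_iff hklt h g a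
          simp only [hiff]
          by_cases hg : pre k hk h = g
          · simp [hg]
          · simp [hg]
      _ = ∑ a : Ξsp × Ysp, ∑ h : Fin T → Ξsp × Ysp,
            if pre (k+1) hklt h = Fin.snoc g a then histLik pol lik θ h else 0 :=
          Finset.sum_comm
      _ = ∑ a : Ξsp × Ysp, preLik pol lik (k+1) hklt θ (Fin.snoc g a) := by
          refine Finset.sum_congr rfl fun a _ => ?_
          exact ih (k+1) hklt (by omega) θ (Fin.snoc g a)
      _ = ∑ a : Ξsp × Ysp, preLik pol lik k hk θ g * step pol lik ⟨k, hklt⟩ θ g a := by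
          refine Finset.sum_congr rfl fun a _ => ?_
          rw [preLik_snoc]
      _ = preLik pol lik k hk θ g := by
          rw [← Finset.mul_sum]
          have hone : (∑ a : Ξsp × Ysp, step pol lik ⟨k, hklt⟩ θ g a) = 1 := by
            rw [Fintype.sum_prod_type]
            simp only [step]
            calc (∑ ξ, ∑ y, pol ⟨k,hklt⟩ g ξ * lik ⟨k,hklt⟩ θ g ξ y)
                = ∑ ξ, pol ⟨k,hklt⟩ g ξ * ∑ y, lik ⟨k,hklt⟩ θ g ξ y := by
                  refine Finset.sum_congr rfl fun ξ _ => ?_; rw [Finset.mul_sum]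
              _ = ∑ ξ, pol ⟨k,hklt⟩ g ξ := by
                  refine Finset.sum_congr rfl fun ξ _ => ?_; rw [hlik1]; ring
              _ = 1 := hpol1 _ _
          rw [hone, mul_one]

include hpol1 hlik1 in
lemma sum_histLik (θ : Θsp) : (∑ h : Fin T → Ξsp × Ysp, histLik pol lik θ h) = 1 := by
  have := master pol lik hpol1 hlik1 T 0 (Nat.zero_le T) (by omega) θ (fun i => i.elim0)
  rw [preLik_zero] at this
  rw [← this]
  refine Finset.sum_congr rfl fun h _ => ?_
  rw [if_pos]
  funext i
  exact i.elim0

include hpol1 hlik1 in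
lemma master_xi (k : ℕ) (hklt : k < T) (θ : Θsp) (g : Fin k → Ξsp × Ysp) (ξ₀ : Ξsp) :
    (∑ h : Fin T → Ξsp × Ysp,
        @ite ℝ (((pre k hklt.le h, (h ⟨k, hklt⟩).1) : (Fin k → Ξsp × Ysp) × Ξsp) = (g, ξ₀))
          (Classical.propDecidable _) (histLik pol lik θ h) 0)
      = preLik pol lik k hklt.le θ g * pol ⟨k, hklt⟩ g ξ₀ := by
  calc (∑ h : Fin T → Ξsp × Ysp,
        @ite ℝ (((pre k hklt.le h, (h ⟨k, hklt⟩).1) : (Fin k → Ξsp × Ysp) × Ξsp) = (g, ξ₀))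
          (Classical.propDecidable _) (histLik pol lik θ h) 0)
      = ∑ h : Fin T → Ξsp × Ysp, ∑ y : Ysp,
          (if pre (k+1) hklt h = Fin.snoc g (ξ₀, y) then histLik pol lik θ h else 0) := by
        refine Finset.sum_congr rfl fun h _ => ?_
        have hiff : ∀ y : Ysp, (pre (k+1) hklt h = Fin.snoc g (ξ₀, y))
            ↔ (pre k hklt.le h = g ∧ (h ⟨k, hklt⟩).1 = ξ₀ ∧ (h ⟨k, hklt⟩).2 = y) := by
          intro y
          rw [pre_succ_eq_iff]
          constructor
          · rintro ⟨h1, h2⟩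
            exact ⟨h1, by rw [h2], by rw [h2]⟩
          · rintro ⟨h1, h2, h3⟩
            exact ⟨h1, Prod.ext h2 h3⟩
        simp only [hiff]
        by_cases hc : pre k hklt.le h = g ∧ (h ⟨k, hklt⟩).1 = ξ₀
        · rw [if_pos (by simp [Prod.ext_iff, hc.1, hc.2])]
          simp only [hc.1, hc.2, true_and]
          rw [Fintype.sum_ite_eq ((h ⟨k, hklt⟩).2) (fun _ => histLik pol lik θ h)]
        · rw [if_neg (by simp [Prod.ext_iff]; tauto)]
          refine (Finset.sum_eq_zero fun y _ => ?_).symm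
          rw [if_neg (by tauto)]
    _ = ∑ y : Ysp, ∑ h : Fin T → Ξsp × Ysp,
          (if pre (k+1) hklt h = Fin.snoc g (ξ₀, y) then histLik pol lik θ h else 0) :=
        Finset.sum_comm
    _ = ∑ y : Ysp, preLik pol lik (k+1) hklt θ (Fin.snoc g (ξ₀, y)) := by
        refine Finset.sum_congr rfl fun y _ => ?_
        exact master pol lik hpol1 hlik1 (T - (k+1)) (k+1) hklt (by omega) θ _
    _ = ∑ y : Ysp, preLik pol lik k hklt.le θ g * (pol ⟨k, hklt⟩ g ξ₀ * lik ⟨k, hklt⟩ θ g ξ₀ y) := by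
        refine Finset.sum_congr rfl fun y _ => ?_
        rw [preLik_snoc]
        rfl
    _ = preLik pol lik k hklt.le θ g * pol ⟨k, hklt⟩ g ξ₀ := by
        rw [← Finset.mul_sum, ← Finset.mul_sum, hlik1, mul_one]

include hpol1 hlik1 in
lemma master_yxi (k : ℕ) (hklt : k < T) (θ : Θsp) (g : Fin k → Ξsp × Ysp)
    (ξ₀ : Ξsp) (y₀ : Ysp) :
    (∑ h : Fin T → Ξsp × Ysp,
        @ite ℝ ((((h ⟨k, hklt⟩).2, (pre k hklt.le h, (h ⟨k, hklt⟩).1))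
            : Ysp × ((Fin k → Ξsp × Ysp) × Ξsp)) = (y₀, (g, ξ₀)))
          (Classical.propDecidable _) (histLik pol lik θ h) 0)
      = preLik pol lik (k+1) hklt θ (Fin.snoc g (ξ₀, y₀)) := by
  rw [← master pol lik hpol1 hlik1 (T - (k+1)) (k+1) hklt (by omega) θ (Fin.snoc g (ξ₀, y₀))]
  refine Finset.sum_congr rfl fun h _ => ?_
  have hiff : ((((h ⟨k, hklt⟩).2, (pre k hklt.le h, (h ⟨k, hklt⟩).1))
            : Ysp × ((Fin k → Ξsp × Ysp) × Ξsp)) = (y₀, (g, ξ₀)))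
      ↔ (pre (k+1) hklt h = Fin.snoc g (ξ₀, y₀)) := by
    rw [pre_succ_eq_iff]
    constructor
    · rintro H
      simp only [Prod.ext_iff] at H
      exact ⟨H.2.1, Prod.ext H.2.2 H.1⟩
    · rintro ⟨h1, h2⟩
      simp [Prod.ext_iff, h1, h2]
  by_cases hc : pre (k+1) hklt h = Fin.snoc g (ξ₀, y₀)
  · rw [if_pos (hiff.2 hc), if_pos hc]
  · rw [if_neg (fun H => hc (hiff.1 H)), if_neg hc]

lemma pr_fst_pair {γ : Type*} (W : (Fin T → Ξsp × Ysp) → γ) (θ₀ : Θsp) (w : γ) :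
    pr (joint prior pol lik) (fun ω => (ω.1, W ω.2)) (θ₀, w)
      = prior θ₀ * ∑ h, (if W h = w then histLik pol lik θ₀ h else 0) := by
  rw [pr, Fintype.sum_prod_type]
  dsimp only
  simp only [Prod.mk.injEq, ite_and]
  rw [Finset.sum_comm]
  simp only [Fintype.sum_ite_eq']
  rw [Finset.mul_sum]
  refine Finset.sum_congr rfl fun h _ => ?_
  by_cases hw : W h = w <;> simp [hw, joint]

lemma pr_snd_pair {γ : Type*} (W : (Fin T → Ξsp × Ysp) → γ) (w : γ) :
    pr (joint prior pol lik) (fun ω => W ω.2) w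
      = ∑ θ, prior θ * ∑ h, (if W h = w then histLik pol lik θ h else 0) := by
  rw [pr, Fintype.sum_prod_type]
  dsimp only
  refine Finset.sum_congr rfl fun θ _ => ?_
  rw [Finset.mul_sum]
  refine Finset.sum_congr rfl fun h _ => ?_
  by_cases hw : W h = w <;> simp [hw, joint]

include hpol1 hlik1 in
lemma pr_fst_eq (hprs : ∑ θ, prior θ = 1) (θ₀ : Θsp) :
    pr (joint prior pol lik) (fun ω => ω.1) θ₀ = prior θ₀ := by
  rw [pr, Fintype.sum_prod_type]
  dsimp only
  rw [Finset.sum_comm]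
  simp only [Fintype.sum_ite_eq']
  have : (∑ h : Fin T → Ξsp × Ysp, joint prior pol lik (θ₀, h))
      = prior θ₀ * ∑ h, histLik pol lik θ₀ h := by
    rw [Finset.mul_sum]; rfl
  rw [this, sum_histLik pol lik hpol1 hlik1, mul_one]

lemma pr_snd_eq (h₀ : Fin T → Ξsp × Ysp) :
    pr (joint prior pol lik) (fun ω => ω.2) h₀ = ∑ θ, joint prior pol lik (θ, h₀) := by
  rw [pr, Fintype.sum_prod_type]
  dsimp only
  refine Finset.sum_congr rfl fun θ _ => ?_
  exact sum_ite_eq_cl h₀ (fun h => joint prior pol lik (θ, h))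

lemma pr_id_eq (ω₀ : Θsp × (Fin T → Ξsp × Ysp)) :
    pr (joint prior pol lik) (fun ω => (ω.1, ω.2)) ω₀ = joint prior pol lik ω₀ := by
  rw [pr]
  exact sum_ite_eq_cl ω₀ (joint prior pol lik)

/-- The telescoping quantity. -/
def Dfun (k : ℕ) (ω : Θsp × (Fin T → Ξsp × Ysp)) : ℝ :=
  if hk : k ≤ T then
    Real.log (prior ω.1 * preLik pol lik k hk ω.1 (pre k hk ω.2))
      - Real.log (∑ θ', prior θ' * preLik pol lik k hk θ' (pre k hk ω.2))
  else 0

variable (hpolp : ∀ t h', ∀ ξ, 0 < pol t h' ξ)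
  (hlikp : ∀ t θ h' ξ, ∀ y, 0 < lik t θ h' ξ y)
  (hprp : ∀ θ, 0 < prior θ)

include hpol1 hlik1 in
lemma pr_XZ (t : Fin T) (ω : Θsp × (Fin T → Ξsp × Ysp)) (hk : t.1 ≤ T) :
    pr (joint prior pol lik) (fun ω' => (ω'.1, (res t ω'.2, (ω'.2 t).1)))
        (ω.1, (res t ω.2, (ω.2 t).1))
      = prior ω.1 * (preLik pol lik t.1 hk ω.1 (pre t.1 hk ω.2)
          * pol t (pre t.1 hk ω.2) ((ω.2 t).1)) := by
  rw [pr_fst_pair prior pol lik (fun h => (res t h, (h t).1)) ω.1 (res t ω.2, (ω.2 t).1)]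
  congr 1
  exact master_xi pol lik hpol1 hlik1 t.1 t.2 ω.1 (pre t.1 hk ω.2) ((ω.2 t).1)

include hpol1 hlik1 in
lemma pr_Z (t : Fin T) (ω : Θsp × (Fin T → Ξsp × Ysp)) (hk : t.1 ≤ T) :
    pr (joint prior pol lik) (fun ω' => (res t ω'.2, (ω'.2 t).1)) (res t ω.2, (ω.2 t).1)
      = (∑ θ', prior θ' * preLik pol lik t.1 hk θ' (pre t.1 hk ω.2))
          * pol t (pre t.1 hk ω.2) ((ω.2 t).1) := by
  rw [pr_snd_pair prior pol lik (fun h => (res t h, (h t).1)) (res t ω.2, (ω.2 t).1)]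
  rw [Finset.sum_mul]
  refine Finset.sum_congr rfl fun θ' _ => ?_
  rw [mul_assoc]
  congr 1
  exact master_xi pol lik hpol1 hlik1 t.1 t.2 θ' (pre t.1 hk ω.2) ((ω.2 t).1)

include hpol1 hlik1 in
lemma pr_XYZ (t : Fin T) (ω : Θsp × (Fin T → Ξsp × Ysp)) (hk1 : t.1 + 1 ≤ T) :
    pr (joint prior pol lik) (fun ω' => (ω'.1, ((ω'.2 t).2, (res t ω'.2, (ω'.2 t).1))))
        (ω.1, ((ω.2 t).2, (res t ω.2, (ω.2 t).1)))
      = prior ω.1 * preLik pol lik (t.1+1) hk1 ω.1 (pre (t.1+1) hk1 ω.2) := by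
  rw [pr_fst_pair prior pol lik (fun h => ((h t).2, (res t h, (h t).1))) ω.1
    ((ω.2 t).2, (res t ω.2, (ω.2 t).1))]
  congr 1
  have hm := master_yxi pol lik hpol1 hlik1 t.1 t.2 ω.1 (pre t.1 t.2.le ω.2)
    ((ω.2 t).1) ((ω.2 t).2)
  have he : preLik pol lik (t.1+1) hk1 ω.1
        (Fin.snoc (pre t.1 t.2.le ω.2) ((ω.2 t).1, (ω.2 t).2))
      = preLik pol lik (t.1+1) hk1 ω.1 (pre (t.1+1) hk1 ω.2) :=
    congrArg (fun g => preLik pol lik (t.1+1) hk1 ω.1 g) (pre_succ t.2 ω.2).symm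
  exact hm.trans he

include hpol1 hlik1 in
lemma pr_YZ (t : Fin T) (ω : Θsp × (Fin T → Ξsp × Ysp)) (hk1 : t.1 + 1 ≤ T) :
    pr (joint prior pol lik) (fun ω' => ((ω'.2 t).2, (res t ω'.2, (ω'.2 t).1)))
        ((ω.2 t).2, (res t ω.2, (ω.2 t).1))
      = ∑ θ', prior θ' * preLik pol lik (t.1+1) hk1 θ' (pre (t.1+1) hk1 ω.2) := by
  rw [pr_snd_pair prior pol lik (fun h => ((h t).2, (res t h, (h t).1)))
    ((ω.2 t).2, (res t ω.2, (ω.2 t).1))]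
  refine Finset.sum_congr rfl fun θ' _ => ?_
  congr 1
  have hm := master_yxi pol lik hpol1 hlik1 t.1 t.2 θ' (pre t.1 t.2.le ω.2)
    ((ω.2 t).1) ((ω.2 t).2)
  have he : preLik pol lik (t.1+1) hk1 θ'
        (Fin.snoc (pre t.1 t.2.le ω.2) ((ω.2 t).1, (ω.2 t).2))
      = preLik pol lik (t.1+1) hk1 θ' (pre (t.1+1) hk1 ω.2) :=
    congrArg (fun g => preLik pol lik (t.1+1) hk1 θ' g) (pre_succ t.2 ω.2).symm
  exact hm.trans he

lemma D_top (ω : Θsp × (Fin T → Ξsp × Ysp)) :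
    Dfun prior pol lik T ω
      = Real.log (joint prior pol lik ω)
        - Real.log (∑ θ', joint prior pol lik (θ', ω.2)) := by
  unfold Dfun
  rw [dif_pos le_rfl]
  rfl

lemma D_zero (hprs : ∑ θ, prior θ = 1) (ω : Θsp × (Fin T → Ξsp × Ysp)) :
    Dfun prior pol lik 0 ω = Real.log (prior ω.1) := by
  unfold Dfun
  rw [dif_pos (Nat.zero_le T)]
  simp only [preLik_zero, mul_one]
  rw [hprs, Real.log_one, sub_zero]

include hpol1 hlik1 hpolp hlikp hprp in
lemma cmi_step [Nonempty Θsp] (t : Fin T) :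
    cmi (joint prior pol lik) (fun ω => ω.1) (fun ω => (ω.2 t).2)
        (fun ω => (res t ω.2, (ω.2 t).1))
      = ∑ ω, joint prior pol lik ω
          * (Dfun prior pol lik (t.1+1) ω - Dfun prior pol lik t.1 ω) := by
  have hk : t.1 ≤ T := t.2.le
  have hk1 : t.1 + 1 ≤ T := t.2
  simp only [cmi]
  simp only [ent_eq]
  have comb : ∀ (A B C E : Θsp × (Fin T → Ξsp × Ysp) → ℝ),
      ((-∑ ω, A ω) - (-∑ ω, B ω)) - ((-∑ ω, C ω) - (-∑ ω, E ω))
        = ∑ ω, (B ω - A ω + (C ω - E ω)) := by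
    intro A B C E
    rw [Finset.sum_add_distrib, Finset.sum_sub_distrib, Finset.sum_sub_distrib]
    ring
  rw [comb]
  refine Finset.sum_congr rfl fun ω _ => ?_
  rw [pr_XZ prior pol lik hpol1 hlik1 t ω hk,
    pr_Z prior pol lik hpol1 hlik1 t ω hk,
    pr_XYZ prior pol lik hpol1 hlik1 t ω hk1,
    pr_YZ prior pol lik hpol1 hlik1 t ω hk1]
  unfold Dfun
  rw [dif_pos hk1, dif_pos hk]
  -- positivity facts
  have hprior : prior ω.1 ≠ 0 := ne_of_gt (hprp ω.1)
  have hpre1 : preLik pol lik t.1 hk ω.1 (pre t.1 hk ω.2) ≠ 0 :=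
    ne_of_gt (preLik_pos pol lik hpolp hlikp _ _ _ _)
  have hpolne : pol t (pre t.1 hk ω.2) ((ω.2 t).1) ≠ 0 := ne_of_gt (hpolp _ _ _)
  have hsum1 : (∑ θ', prior θ' * preLik pol lik t.1 hk θ' (pre t.1 hk ω.2)) ≠ 0 :=
    ne_of_gt (Finset.sum_pos
      (fun θ' _ => mul_pos (hprp θ') (preLik_pos pol lik hpolp hlikp _ _ _ _))
      Finset.univ_nonempty)
  rw [show prior ω.1 * (preLik pol lik t.1 hk ω.1 (pre t.1 hk ω.2)
        * pol t (pre t.1 hk ω.2) ((ω.2 t).1))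
      = (prior ω.1 * preLik pol lik t.1 hk ω.1 (pre t.1 hk ω.2))
        * pol t (pre t.1 hk ω.2) ((ω.2 t).1) from by ring]
  rw [Real.log_mul (mul_ne_zero hprior hpre1) hpolne]
  rw [Real.log_mul hsum1 hpolne]
  ring

end Aux

/-- Total expected information gain of a stochastic design policy equals mutual
information: I_T(π) := E_{p(θ)p(h_T|θ,π)}[Σ_t I(θ; y_t | h_{t-1}, ξ_t)]
  = E_{p(θ)p(h_T|θ,π)}[log p(h_T|θ,π)] − E_{p(h_T|π)}[log p(h_T|π)]
  = I(θ; h_T | π). -/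
theorem total_EIG_eq_mutual_information
    {Θsp Ξsp Ysp : Type*} [Fintype Θsp] [Fintype Ξsp] [Fintype Ysp] (T : ℕ)
    (prior : Θsp → ℝ)
    (pol : (t : Fin T) → (Fin t.val → Ξsp × Ysp) → Ξsp → ℝ)
    (lik : (t : Fin T) → Θsp → (Fin t.val → Ξsp × Ysp) → Ξsp → Ysp → ℝ)
    (hpr : ∀ θ, 0 < prior θ) (hprs : ∑ θ, prior θ = 1)
    (hpol : ∀ t h', (∀ ξ, 0 < pol t h' ξ) ∧ ∑ ξ, pol t h' ξ = 1)
    (hlik : ∀ t θ h' ξ, (∀ y, 0 < lik t θ h' ξ y) ∧ ∑ y, lik t θ h' ξ y = 1) :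
    (∑ t : Fin T, cmi (joint prior pol lik)
        (fun ω => ω.1) (fun ω => (ω.2 t).2) (fun ω => (res t ω.2, (ω.2 t).1)))
      = (∑ ω : Θsp × (Fin T → Ξsp × Ysp),
            joint prior pol lik ω * Real.log (histLik pol lik ω.1 ω.2))
        - (∑ h : Fin T → Ξsp × Ysp,
            (∑ θ, joint prior pol lik (θ, h)) *
              Real.log (∑ θ, joint prior pol lik (θ, h)))
    ∧ (∑ t : Fin T, cmi (joint prior pol lik)
        (fun ω => ω.1) (fun ω => (ω.2 t).2) (fun ω => (res t ω.2, (ω.2 t).1)))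
      = mi (joint prior pol lik) (fun ω => ω.1) (fun ω => ω.2) := by
  have hpolp : ∀ t h' ξ, 0 < pol t h' ξ := fun t h' => (hpol t h').1
  have hpol1 : ∀ t h', ∑ ξ, pol t h' ξ = 1 := fun t h' => (hpol t h').2
  have hlikp : ∀ t θ h' ξ y, 0 < lik t θ h' ξ y := fun t θ h' ξ => (hlik t θ h' ξ).1
  have hlik1 : ∀ t θ h' ξ, ∑ y, lik t θ h' ξ y = 1 := fun t θ h' ξ => (hlik t θ h' ξ).2
  have hne : Nonempty Θsp := by
    rcases isEmpty_or_nonempty Θsp with hE | hN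
    · exfalso
      rw [Finset.univ_eq_empty, Finset.sum_empty] at hprs
      exact zero_ne_one hprs
    · exact hN
  have hjpos : ∀ ω : Θsp × (Fin T → Ξsp × Ysp), 0 < joint prior pol lik ω :=
    fun ω => mul_pos (hpr ω.1) (histLik_pos pol lik hpolp hlikp ω.1 ω.2)
  have hpHpos : ∀ h : Fin T → Ξsp × Ysp, 0 < ∑ θ', joint prior pol lik (θ', h) :=
    fun h => Finset.sum_pos (fun θ' _ => hjpos (θ', h)) Finset.univ_nonempty
  have hlogj : ∀ ω : Θsp × (Fin T → Ξsp × Ysp),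
      Real.log (joint prior pol lik ω)
        = Real.log (prior ω.1) + Real.log (histLik pol lik ω.1 ω.2) := by
    intro ω
    have hj : joint prior pol lik ω = prior ω.1 * histLik pol lik ω.1 ω.2 := rfl
    rw [hj, Real.log_mul (ne_of_gt (hpr ω.1))
      (ne_of_gt (histLik_pos pol lik hpolp hlikp ω.1 ω.2))]
  have central :
      (∑ t : Fin T, cmi (joint prior pol lik)
          (fun ω => ω.1) (fun ω => (ω.2 t).2) (fun ω => (res t ω.2, (ω.2 t).1)))
        = (∑ ω : Θsp × (Fin T → Ξsp × Ysp),
              joint prior pol lik ω * Real.log (histLik pol lik ω.1 ω.2))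
          - ∑ ω : Θsp × (Fin T → Ξsp × Ysp),
              joint prior pol lik ω * Real.log (∑ θ', joint prior pol lik (θ', ω.2)) := by
    calc (∑ t : Fin T, cmi (joint prior pol lik)
          (fun ω => ω.1) (fun ω => (ω.2 t).2) (fun ω => (res t ω.2, (ω.2 t).1)))
        = ∑ t : Fin T, ∑ ω : Θsp × (Fin T → Ξsp × Ysp), joint prior pol lik ω
            * (Dfun prior pol lik (t.1+1) ω - Dfun prior pol lik t.1 ω) :=
          Finset.sum_congr rfl fun t _ =>
            cmi_step prior pol lik hpol1 hlik1 hpolp hlikp hpr t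
      _ = ∑ ω : Θsp × (Fin T → Ξsp × Ysp), ∑ t : Fin T, joint prior pol lik ω
            * (Dfun prior pol lik (t.1+1) ω - Dfun prior pol lik t.1 ω) :=
          Finset.sum_comm
      _ = ∑ ω : Θsp × (Fin T → Ξsp × Ysp), joint prior pol lik ω
            * (Dfun prior pol lik T ω - Dfun prior pol lik 0 ω) := by
          refine Finset.sum_congr rfl fun ω _ => ?_
          rw [← Finset.mul_sum]
          congr 1
          rw [Fin.sum_univ_eq_sum_range
            (fun k => Dfun prior pol lik (k+1) ω - Dfun prior pol lik k ω) T]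
          exact Finset.sum_range_sub (fun k => Dfun prior pol lik k ω) T
      _ = _ := by
          rw [← Finset.sum_sub_distrib]
          refine Finset.sum_congr rfl fun ω _ => ?_
          rw [D_top, D_zero prior pol lik hprs, hlogj ω]
          ring
  have comb2 : ∀ (A B C : Θsp × (Fin T → Ξsp × Ysp) → ℝ),
      (-∑ ω, A ω) + (-∑ ω, B ω) - (-∑ ω, C ω) = ∑ ω, (C ω - A ω - B ω) := by
    intro A B C
    rw [Finset.sum_sub_distrib, Finset.sum_sub_distrib]
    ring
  constructor
  · rw [central]
    congr 1
    rw [Fintype.sum_prod_type]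
    dsimp only
    rw [Finset.sum_comm]
    refine Finset.sum_congr rfl fun h _ => ?_
    rw [Finset.sum_mul]
  · rw [central]
    have hmi : mi (joint prior pol lik) (fun ω => ω.1) (fun ω => ω.2)
        = ∑ ω : Θsp × (Fin T → Ξsp × Ysp),
            (joint prior pol lik ω * Real.log (histLik pol lik ω.1 ω.2)
              - joint prior pol lik ω
                  * Real.log (∑ θ', joint prior pol lik (θ', ω.2))) := by
      simp only [mi]
      simp only [ent_eq]
      rw [comb2]
      refine Finset.sum_congr rfl fun ω _ => ?_
      rw [pr_fst_eq prior pol lik hpol1 hlik1 hprs ω.1,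
        pr_snd_eq prior pol lik ω.2, pr_id_eq prior pol lik (ω.1, ω.2)]
      simp only [Prod.mk.eta]
      rw [hlogj ω]
      ring
    rw [hmi, ← Finset.sum_sub_distrib]


end Stmt4
end
end

section
/- The InfoNCE objective lower-bounds the mutual information: for any critic function U : H^T × Θ → ℝ and any number of contrastive samples L ≥ 1, with θ₀ ∼ p(θ), h_T ∼ p(h_T | θ₀, π), and independent contrastive samples θ₁,...,θ_L ∼ p(θ), we have E[log( exp(U(h_T, θ₀)) / ((1/(L+1)) Σ_{i=0}^L exp(U(h_T, θ_i))) )] ≤ I(θ; h_T | π). -/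
open Finset
open scoped Classical

noncomputable section

namespace Stmt7

/-- The InfoNCE objective
`L_T^NCE(π, U; L) = E_{p(θ_{0:L}) p(h_T|θ₀,π)}
  [log( exp U(h_T,θ₀) / ((1/(L+1)) Σ_{i=0}^L exp U(h_T,θ_i)) )]`,
with `θ₀,...,θ_L` i.i.d. from the prior and `h_T ∼ p(·|θ₀,π)`. -/
def nce {Θsp Hsp : Type*} [Fintype Θsp] [Fintype Hsp]
    (prior : Θsp → ℝ) (lik : Θsp → Hsp → ℝ) (U : Hsp → Θsp → ℝ) (L : ℕ) : ℝ :=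
  ∑ θs : Fin (L+1) → Θsp, (∏ i, prior (θs i)) *
    ∑ h, lik (θs 0) h *
      Real.log (Real.exp (U h (θs 0)) /
        ((1/((L : ℝ)+1)) * ∑ i, Real.exp (U h (θs i))))

/-- The sequential Prior Contrastive Estimation (sPCE) bound
`L_T^sPCE(π, L) = E_{p(θ_{0:L}) p(h_T|θ₀,π)}
  [log( p(h_T|θ₀,π) / ((1/(L+1)) Σ_{ℓ=0}^L p(h_T|θ_ℓ,π)) )]`. -/
def spce {Θsp Hsp : Type*} [Fintype Θsp] [Fintype Hsp]
    (prior : Θsp → ℝ) (lik : Θsp → Hsp → ℝ) (L : ℕ) : ℝ :=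
  ∑ θs : Fin (L+1) → Θsp, (∏ i, prior (θs i)) *
    ∑ h, lik (θs 0) h *
      Real.log (lik (θs 0) h / ((1/((L : ℝ)+1)) * ∑ i, lik (θs i) h))

/-- Sum over all tuples of the product of priors is 1. -/
lemma sum_prod_one {Θsp : Type*} [Fintype Θsp] (prior : Θsp → ℝ)
    (hprs : ∑ θ, prior θ = 1) : ∀ n : ℕ,
    ∑ θs : Fin n → Θsp, ∏ i, prior (θs i) = 1 := by
  intro n
  induction n with
  | zero => simp
  | succ n ih =>
    rw [← (Fin.consEquiv (fun _ : Fin (n+1) => Θsp)).sum_comp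
      (fun θs => ∏ i, prior (θs i))]
    rw [Fintype.sum_prod_type]
    simp only [Fin.consEquiv_apply, Fin.prod_univ_succ, Fin.cons_zero, Fin.cons_succ]
    rw [← Finset.sum_mul_sum, hprs, ih, mul_one]

/-- Marginalization: an expectation depending only on the first coordinate. -/
lemma marg {Θsp : Type*} [Fintype Θsp] (prior : Θsp → ℝ)
    (hprs : ∑ θ, prior θ = 1) (n : ℕ) (F : Θsp → ℝ) :
    ∑ θs : Fin (n+1) → Θsp, (∏ i, prior (θs i)) * F (θs 0)
      = ∑ θ, prior θ * F θ := by
  rw [← (Fin.consEquiv (fun _ : Fin (n+1) => Θsp)).sum_comp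
    (fun θs => (∏ i, prior (θs i)) * F (θs 0))]
  rw [Fintype.sum_prod_type]
  simp only [Fin.consEquiv_apply, Fin.prod_univ_succ, Fin.cons_zero, Fin.cons_succ]
  have h1 : ∀ θ : Θsp, ∑ g : Fin n → Θsp, (prior θ * ∏ i, prior (g i)) * F θ
      = prior θ * F θ := by
    intro θ
    rw [← Finset.sum_mul, ← Finset.mul_sum, sum_prod_one prior hprs n, mul_one]
  simp only [h1]

/-- Symmetrization identity for the contrastive denominator. -/
lemma key_sum {Θsp : Type*} [Fintype Θsp] (prior : Θsp → ℝ)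
    (hprs : ∑ θ, prior θ = 1)
    (E : Θsp → ℝ) (hE : ∀ θ, 0 < E θ) (n : ℕ) :
    ((n:ℝ)+1) * ∑ θs : Fin (n+1) → Θsp,
        (∏ i, prior (θs i)) * (E (θs 0) / ∑ i, E (θs i)) = 1 := by
  have hS : ∀ θs : Fin (n+1) → Θsp, 0 < ∑ i, E (θs i) :=
    fun θs => Finset.sum_pos (fun i _ => hE _) Finset.univ_nonempty
  have hswap : ∀ k : Fin (n+1),
      ∑ θs : Fin (n+1) → Θsp, (∏ i, prior (θs i)) * (E (θs k) / ∑ i, E (θs i))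
      = ∑ θs : Fin (n+1) → Θsp, (∏ i, prior (θs i)) * (E (θs 0) / ∑ i, E (θs i)) := by
    intro k
    have hbij : Function.Bijective
        (fun θs : Fin (n+1) → Θsp => θs ∘ (Equiv.swap (0 : Fin (n+1)) k)) := by
      refine Function.bijective_iff_has_inverse.mpr
        ⟨fun θs => θs ∘ (Equiv.swap (0 : Fin (n+1)) k), ?_, ?_⟩ <;>
        intro f <;> funext i <;> simp [Function.comp]
    refine Fintype.sum_bijective _ hbij _ _ ?_
    intro θs
    simp only [Function.comp]
    rw [Equiv.swap_apply_left]
    rw [Equiv.prod_comp (Equiv.swap (0 : Fin (n+1)) k) (fun i => prior (θs i)),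
        Equiv.sum_comp (Equiv.swap (0 : Fin (n+1)) k) (fun i => E (θs i))]
  have h1 : ∑ k : Fin (n+1), ∑ θs : Fin (n+1) → Θsp,
      (∏ i, prior (θs i)) * (E (θs k) / ∑ i, E (θs i))
      = ((n:ℝ)+1) * ∑ θs : Fin (n+1) → Θsp,
        (∏ i, prior (θs i)) * (E (θs 0) / ∑ i, E (θs i)) := by
    simp only [hswap, Finset.sum_const, Finset.card_univ, Fintype.card_fin,
      nsmul_eq_mul, Nat.cast_add, Nat.cast_one]
  rw [← h1, Finset.sum_comm]
  have h2 : ∀ θs : Fin (n+1) → Θsp,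
      ∑ k : Fin (n+1), (∏ i, prior (θs i)) * (E (θs k) / ∑ i, E (θs i))
      = ∏ i, prior (θs i) := by
    intro θs
    rw [← Finset.mul_sum, ← Finset.sum_div, div_self (hS θs).ne', mul_one]
  rw [Finset.sum_congr rfl fun θs _ => h2 θs, sum_prod_one prior hprs]

/-- The InfoNCE objective lower-bounds the mutual information: for any critic
U and any number of contrastive samples L ≥ 1, `nce prior lik U L ≤ I(θ; h_T | π)`,
the mutual information computed under the joint `p(θ) p(h_T | θ, π)` with
marginal `p(h_T|π) = Σ_θ p(θ)p(h_T|θ,π)`. -/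
theorem nce_le_mutual_information
    {Θsp Hsp : Type*} [Fintype Θsp] [Fintype Hsp]
    (prior : Θsp → ℝ) (lik : Θsp → Hsp → ℝ)
    (hpr : ∀ θ, 0 < prior θ) (hprs : ∑ θ, prior θ = 1)
    (hlik : ∀ θ h, 0 < lik θ h) (hliks : ∀ θ, ∑ h, lik θ h = 1)
    (U : Hsp → Θsp → ℝ) (L : ℕ) (hL : 1 ≤ L) :
    nce prior lik U L
      ≤ ∑ θ, ∑ h, prior θ * lik θ h *
          Real.log (lik θ h / (∑ θ', prior θ' * lik θ' h)) := by
  have hΘ : (Finset.univ : Finset Θsp).Nonempty := by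
    by_contra hc
    rw [Finset.not_nonempty_iff_eq_empty] at hc
    rw [hc, Finset.sum_empty] at hprs
    exact zero_ne_one hprs
  set m : Hsp → ℝ := fun h => ∑ θ', prior θ' * lik θ' h with hm_def
  have hm : ∀ h, 0 < m h :=
    fun h => Finset.sum_pos (fun θ _ => mul_pos (hpr θ) (hlik θ h)) hΘ
  have hmsum : ∑ h, m h = 1 := by
    simp only [hm_def]
    rw [Finset.sum_comm]
    simp only [← Finset.mul_sum, hliks, mul_one]
    exact hprs
  have hc : (0:ℝ) < 1/((L:ℝ)+1) := by positivity
  have hSpos : ∀ (h : Hsp) (θs : Fin (L+1) → Θsp),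
      0 < ∑ i, Real.exp (U h (θs i)) :=
    fun h θs => Finset.sum_pos (fun i _ => Real.exp_pos _) Finset.univ_nonempty
  -- rewrite MI as an expectation over the tuple θs
  have hMIexp : (∑ θ, ∑ h, prior θ * lik θ h * Real.log (lik θ h / m h))
      = ∑ θs : Fin (L+1) → Θsp, (∏ i, prior (θs i)) *
          ∑ h, lik (θs 0) h * Real.log (lik (θs 0) h / m h) := by
    rw [marg prior hprs L (fun θ => ∑ h, lik θ h * Real.log (lik θ h / m h))]
    refine Finset.sum_congr rfl fun θ _ => ?_
    rw [Finset.mul_sum]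
    exact Finset.sum_congr rfl fun h _ => by ring
  rw [hMIexp, ← sub_nonneg]
  unfold nce
  rw [← Finset.sum_sub_distrib]
  have hrewrite : ∀ θs : Fin (L+1) → Θsp,
      (∏ i, prior (θs i)) * (∑ h, lik (θs 0) h * Real.log (lik (θs 0) h / m h))
      - (∏ i, prior (θs i)) * (∑ h, lik (θs 0) h *
          Real.log (Real.exp (U h (θs 0)) /
            ((1/((L:ℝ)+1)) * ∑ i, Real.exp (U h (θs i)))))
      = ∑ h, (∏ i, prior (θs i)) * (lik (θs 0) h *
          (Real.log (lik (θs 0) h / m h)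
            - Real.log (Real.exp (U h (θs 0)) /
                ((1/((L:ℝ)+1)) * ∑ i, Real.exp (U h (θs i)))))) := by
    intro θs
    rw [← mul_sub, ← Finset.sum_sub_distrib, Finset.mul_sum]
    exact Finset.sum_congr rfl fun h _ => by ring
  rw [Finset.sum_congr rfl fun θs _ => hrewrite θs]
  -- pointwise bound via log x ≥ 1 - x⁻¹
  have hpoint : ∀ (θs : Fin (L+1) → Θsp) (h : Hsp),
      lik (θs 0) h - m h * (Real.exp (U h (θs 0)) /
          ((1/((L:ℝ)+1)) * ∑ i, Real.exp (U h (θs i))))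
      ≤ lik (θs 0) h *
          (Real.log (lik (θs 0) h / m h)
            - Real.log (Real.exp (U h (θs 0)) /
                ((1/((L:ℝ)+1)) * ∑ i, Real.exp (U h (θs i))))) := by
    intro θs h
    set l0 := lik (θs 0) h with hl0_def
    set e0 := Real.exp (U h (θs 0)) with he0_def
    set avg := (1/((L:ℝ)+1)) * ∑ i, Real.exp (U h (θs i)) with havg_def
    have hl0 : 0 < l0 := hlik _ _
    have he0 : 0 < e0 := Real.exp_pos _
    have havgpos : 0 < avg := mul_pos hc (hSpos h θs)
    have hmh := hm h
    set x := (l0 * avg) / (m h * e0) with hx_def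
    have hx : 0 < x := by positivity
    have hlog : Real.log (l0 / m h) - Real.log (e0 / avg) = Real.log x := by
      have h1 : Real.log x
          = Real.log l0 + Real.log avg - Real.log (m h) - Real.log e0 := by
        rw [hx_def, Real.log_div (mul_pos hl0 havgpos).ne' (mul_pos hmh he0).ne',
            Real.log_mul hl0.ne' havgpos.ne', Real.log_mul hmh.ne' he0.ne']
        ring
      rw [h1, Real.log_div hl0.ne' hmh.ne', Real.log_div he0.ne' havgpos.ne']
      ring
    have hlogx : 1 - x⁻¹ ≤ Real.log x := by
      have h1 := Real.log_le_sub_one_of_pos (inv_pos.mpr hx)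
      rw [Real.log_inv] at h1
      linarith
    have hxinv : x⁻¹ = (m h * e0) / (l0 * avg) := by rw [hx_def, inv_div]
    rw [hlog]
    have hstep : l0 - m h * (e0 / avg) = l0 * (1 - x⁻¹) := by
      rw [hxinv]
      field_simp
    rw [hstep]
    exact mul_le_mul_of_nonneg_left hlogx hl0.le
  -- the lower-bound sum equals zero
  have hA : ∑ θs : Fin (L+1) → Θsp, ∑ h, (∏ i, prior (θs i)) * lik (θs 0) h
      = 1 := by
    have h1 : ∀ θs : Fin (L+1) → Θsp,
        ∑ h, (∏ i, prior (θs i)) * lik (θs 0) h = ∏ i, prior (θs i) := by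
      intro θs
      rw [← Finset.mul_sum, hliks, mul_one]
    rw [Finset.sum_congr rfl fun θs _ => h1 θs, sum_prod_one prior hprs]
  have hB : ∑ θs : Fin (L+1) → Θsp, ∑ h, (∏ i, prior (θs i)) *
      (m h * (Real.exp (U h (θs 0)) /
        ((1/((L:ℝ)+1)) * ∑ i, Real.exp (U h (θs i))))) = 1 := by
    rw [Finset.sum_comm]
    have hterm : ∀ h : Hsp, ∑ θs : Fin (L+1) → Θsp, (∏ i, prior (θs i)) *
        (m h * (Real.exp (U h (θs 0)) /
          ((1/((L:ℝ)+1)) * ∑ i, Real.exp (U h (θs i))))) = m h := by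
      intro h
      have hk := key_sum prior hprs (fun θ => Real.exp (U h θ))
        (fun θ => Real.exp_pos _) L
      have h2 : ∀ θs : Fin (L+1) → Θsp, (∏ i, prior (θs i)) *
          (m h * (Real.exp (U h (θs 0)) /
            ((1/((L:ℝ)+1)) * ∑ i, Real.exp (U h (θs i)))))
          = m h * (((L:ℝ)+1) * ((∏ i, prior (θs i)) *
              (Real.exp (U h (θs 0)) / ∑ i, Real.exp (U h (θs i))))) := by
        intro θs
        have hS := hSpos h θs
        have hL1 : ((L:ℝ)+1) ≠ 0 := by positivity
        field_simp
      rw [Finset.sum_congr rfl fun θs _ => h2 θs, ← Finset.mul_sum,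
        ← Finset.mul_sum, hk, mul_one]
    rw [Finset.sum_congr rfl fun h _ => hterm h, hmsum]
  have hzero : ∑ θs : Fin (L+1) → Θsp, ∑ h, (∏ i, prior (θs i)) *
      (lik (θs 0) h - m h * (Real.exp (U h (θs 0)) /
        ((1/((L:ℝ)+1)) * ∑ i, Real.exp (U h (θs i))))) = 0 := by
    simp only [mul_sub]
    simp only [Finset.sum_sub_distrib]
    rw [hA, hB, sub_self]
  have hge : ∑ θs : Fin (L+1) → Θsp, ∑ h, (∏ i, prior (θs i)) *
      (lik (θs 0) h - m h * (Real.exp (U h (θs 0)) /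
        ((1/((L:ℝ)+1)) * ∑ i, Real.exp (U h (θs i)))))
      ≤ ∑ θs : Fin (L+1) → Θsp, ∑ h, (∏ i, prior (θs i)) * (lik (θs 0) h *
          (Real.log (lik (θs 0) h / m h)
            - Real.log (Real.exp (U h (θs 0)) /
                ((1/((L:ℝ)+1)) * ∑ i, Real.exp (U h (θs i)))))) := by
    refine Finset.sum_le_sum fun θs _ => Finset.sum_le_sum fun h _ => ?_
    exact mul_le_mul_of_nonneg_left (hpoint θs h)
      (Finset.prod_nonneg fun i _ => (hpr _).le)
  linarith [hge, hzero]

end Stmt7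
end
end
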